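/- arXiv:2110.07991 — 2 statements merged into one kernel-verified Lean document; each statement's English description precedes it below -/
import Mathlib

section
/- A Banach space E is Gelfand–Phillips if and only if for every bounded non-totally-bounded subset X of E there exists a bounded linear operator T : E → c₀ such that T(X) is not totally bounded in c₀. -/
open Filter Topology Bornology

noncomputable section

variable {𝕜 E F : Type*} [RCLike 𝕜] [NormedAddCommGroup E] [NormedSpace 𝕜 E]
  [NormedAddCommGroup F] [NormedSpace 𝕜 F]

/-- `c₀` over `𝕜`: scalar sequences vanishing at infinity, with the sup norm. -/
abbrev czero (𝕜 : Type*) [RCLike 𝕜] := ZeroAtInftyContinuousMap ℕ 𝕜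

/-- A sequence of functionals is weak* null if it converges to `0` pointwise. -/
def WeakStarNull (χ : ℕ → E →L[𝕜] 𝕜) : Prop :=
  ∀ x : E, Tendsto (fun n => χ n x) atTop (𝓝 0)

/-- `sup_{x ∈ B} |χ n x| → 0`. -/
def UnifNull (χ : ℕ → E →L[𝕜] 𝕜) (B : Set E) : Prop :=
  Tendsto (fun n => ⨆ x : B, ‖χ n (x : E)‖) atTop (𝓝 0)

/-- A set is limited if every weak* null sequence converges to `0` uniformly on it. -/
def Limited (𝕜 : Type*) [RCLike 𝕜] {E : Type*} [NormedAddCommGroup E]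
    [NormedSpace 𝕜 E] (B : Set E) : Prop :=
  ∀ χ : ℕ → E →L[𝕜] 𝕜, WeakStarNull χ → UnifNull χ B

/-- A Banach space is Gelfand–Phillips if every (bounded) limited set is totally bounded. -/
def GelfandPhillips (𝕜 E : Type*) [RCLike 𝕜] [NormedAddCommGroup E]
    [NormedSpace 𝕜 E] : Prop :=
  ∀ B : Set E, IsBounded B → Limited 𝕜 B → TotallyBounded B

/-!
A bounded set `X` is limited iff `T '' X` is totally bounded for every operator `T : E → c₀`.
Operators `E → c₀` are exactly the maps `x ↦ (χ n x)ₙ` for weak* null sequences `χ` (such a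
sequence is bounded by Banach–Steinhaus, which is where completeness enters), and a bounded subset
of `c₀` is totally bounded iff the coordinate functionals tend to `0` uniformly on it.
-/

open scoped ZeroAtInfty

lemma iSup_image_subtype {α β γ : Type*} [ConditionallyCompleteLattice γ] (f : α → β) (g : β → γ)
    (s : Set α) : ⨆ y : f '' s, g y = ⨆ x : s, g (f x) := by
  simp only [iSup, ← Set.image_eq_range, Set.image_image]
  rw [Set.image_eq_range]

lemma tendstoUniformlyOn_zero_iff_tendsto_iSup_norm {ι α β : Type*} [NormedAddCommGroup β]
    {F : ι → α → β} {p : Filter ι} {S : Set α}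
    (hF : ∀ n, BddAbove (Set.range fun x : S => ‖F n x‖)) :
    TendstoUniformlyOn F 0 p S ↔ Tendsto (fun n => ⨆ x : S, ‖F n x‖) p (𝓝 0) := by
  simp only [Metric.tendstoUniformlyOn_iff, Metric.tendsto_nhds, Pi.zero_apply, dist_zero_left,
    Real.dist_eq, sub_zero, abs_of_nonneg (Real.iSup_nonneg fun _ => norm_nonneg _)]
  refine ⟨fun h ε hε => ?_, fun h ε hε => ?_⟩
  · filter_upwards [h (ε / 2) (by positivity)] with n hn
    exact (Real.iSup_le (fun x : S => (hn x x.2).le) (by positivity)).trans_lt (by linarith)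
  · filter_upwards [h ε hε] with n hn x hx
    exact (le_ciSup (hF n) ⟨x, hx⟩).trans_lt hn

lemma Metric.totallyBounded_of_forall_exists_dist_le {α : Type*} [PseudoMetricSpace α] {S : Set α}
    (h : ∀ ε > 0, ∃ K, TotallyBounded K ∧ ∀ x ∈ S, ∃ y ∈ K, dist x y ≤ ε) :
    TotallyBounded S := by
  refine Metric.totallyBounded_iff.2 fun ε hε => ?_
  obtain ⟨K, hK, hSK⟩ := h (ε / 2) (by positivity)
  obtain ⟨t, ht, hKt⟩ := Metric.totallyBounded_iff.1 hK (ε / 2) (by positivity)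
  refine ⟨t, ht, fun x hx => ?_⟩
  obtain ⟨y, hy, hxy⟩ := hSK x hx
  obtain ⟨z, hz, hyz⟩ := Set.mem_iUnion₂.1 (hKt hy)
  refine Set.mem_iUnion₂.2 ⟨z, hz, ?_⟩
  rw [Metric.mem_ball] at hyz ⊢
  linarith [dist_triangle x y z]

namespace ZeroAtInftyContinuousMap

section Norm

variable {α β : Type*} [TopologicalSpace α] [NormedAddCommGroup β]

lemma norm_apply_le (f : C₀(α, β)) (x : α) : ‖f x‖ ≤ ‖f‖ := by
  rw [← norm_toBCF_eq_norm]
  exact f.toBCF.norm_coe_le_norm x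

lemma dist_apply_le (f g : C₀(α, β)) (x : α) : dist (f x) (g x) ≤ dist f g := by
  rw [← dist_toBCF_eq_dist]
  exact f.toBCF.dist_coe_le_dist (g := g.toBCF) x

lemma norm_le_of_forall_norm_apply_le {f : C₀(α, β)} {C : ℝ} (hC : 0 ≤ C)
    (h : ∀ x, ‖f x‖ ≤ C) : ‖f‖ ≤ C := by
  rw [← norm_toBCF_eq_norm]
  exact (BoundedContinuousFunction.norm_le hC).2 h

lemma bddAbove_range_norm_apply {S : Set C₀(α, β)} (hS : IsBounded S) (x : α) :
    BddAbove (Set.range fun f : S => ‖(f : C₀(α, β)) x‖) := by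
  obtain ⟨C, hSC⟩ := hS.subset_closedBall 0
  refine ⟨C, ?_⟩
  rintro _ ⟨f, rfl⟩
  exact (norm_apply_le _ x).trans (mem_closedBall_zero_iff.1 (hSC f.2))

variable (𝕜) [NormedSpace 𝕜 β]

def evalCLM (x : α) : C₀(α, β) →L[𝕜] β :=
  LinearMap.mkContinuous
    { toFun f := f x
      map_add' _ _ := rfl
      map_smul' _ _ := rfl }
    1 fun f => by simpa using f.norm_apply_le x

end Norm

variable {β : Type*} [NormedAddCommGroup β]

lemma tendsto_atTop (f : C₀(ℕ, β)) : Tendsto f atTop (𝓝 0) :=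
  cocompact_eq_atTop (α := ℕ) ▸ f.zero_at_infty'

def ofTendsto (u : ℕ → β) (hu : Tendsto u atTop (𝓝 0)) : C₀(ℕ, β) where
  toFun := u
  continuous_toFun := continuous_of_discreteTopology
  zero_at_infty' := cocompact_eq_atTop (α := ℕ) ▸ hu

@[simp] lemma ofTendsto_apply (u : ℕ → β) (hu : Tendsto u atTop (𝓝 0)) (n : ℕ) :
    ofTendsto u hu n = u n := rfl

def extendByZero (N : ℕ) : (Fin N → β) →+ C₀(ℕ, β) where
  toFun v := ofTendsto (fun n => if h : n < N then v ⟨n, h⟩ else 0) <|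
    tendsto_const_nhds.congr' <| eventually_atTop.2 ⟨N, fun n hn => by simp [hn.not_gt]⟩
  map_zero' := by ext n; simp
  map_add' v w := by ext n; by_cases h : n < N <;> simp [h]

lemma extendByZero_apply (N : ℕ) (v : Fin N → β) (n : ℕ) :
    extendByZero N v n = if h : n < N then v ⟨n, h⟩ else 0 := rfl

lemma norm_extendByZero_le (N : ℕ) (v : Fin N → β) : ‖extendByZero N v‖ ≤ ‖v‖ := by
  refine norm_le_of_forall_norm_apply_le (norm_nonneg v) fun n => ?_
  by_cases h : n < N
  · simpa [extendByZero_apply, h] using norm_le_pi_norm v ⟨n, h⟩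
  · simp [extendByZero_apply, h]

lemma tendstoUniformlyOn_of_totallyBounded {S : Set C₀(ℕ, β)} (hS : TotallyBounded S) :
    TendstoUniformlyOn (fun n (f : C₀(ℕ, β)) => f n) 0 atTop S := by
  refine Metric.tendstoUniformlyOn_iff.2 fun ε hε => ?_
  obtain ⟨t, ht, hSt⟩ := Metric.totallyBounded_iff.1 hS (ε / 2) (by positivity)
  have hsmall : ∀ᶠ n in atTop, ∀ g ∈ t, ‖g n‖ < ε / 2 :=
    (eventually_all_finite ht).2 fun g _ =>
      (tendsto_norm_zero.comp g.tendsto_atTop).eventually_lt_const (by positivity)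
  filter_upwards [hsmall] with n hn f hf
  obtain ⟨g, hg, hfg⟩ := Set.mem_iUnion₂.1 (hSt hf)
  rw [Pi.zero_apply, dist_zero_left]
  calc ‖f n‖ ≤ dist (f n) (g n) + ‖g n‖ := by simpa using dist_triangle (f n) (g n) 0
    _ < ε := by linarith [dist_apply_le f g n, Metric.mem_ball.1 hfg, hn g hg]

lemma totallyBounded_of_tendstoUniformlyOn [ProperSpace β] {S : Set C₀(ℕ, β)} (hS : IsBounded S)
    (h : TendstoUniformlyOn (fun n (f : C₀(ℕ, β)) => f n) 0 atTop S) : TotallyBounded S := by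
  obtain ⟨C, hSC⟩ := hS.subset_closedBall 0
  -- `S` lies within `ε` of the truncations to the first `N` coordinates, a compact set
  refine Metric.totallyBounded_of_forall_exists_dist_le fun ε hε => ?_
  obtain ⟨N, hN⟩ := eventually_atTop.1 (Metric.tendstoUniformlyOn_iff.1 h ε hε)
  refine ⟨extendByZero N '' Metric.closedBall 0 C, ?_, fun f hf =>
    ⟨extendByZero N fun i => f i, Set.mem_image_of_mem _ ?_, ?_⟩⟩
  · have hcont : Continuous (extendByZero (β := β) N) :=
      AddMonoidHomClass.continuous_of_bound _ 1 fun v => by simpa using norm_extendByZero_le N v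
    exact ((isCompact_closedBall 0 C).image hcont).totallyBounded
  · have hfC := mem_closedBall_zero_iff.1 (hSC hf)
    exact mem_closedBall_zero_iff.2 <| (pi_norm_le_iff_of_nonneg ((norm_nonneg f).trans hfC)).2
      fun i => (f.norm_apply_le i).trans hfC
  · rw [dist_eq_norm]
    refine norm_le_of_forall_norm_apply_le hε.le fun n => ?_
    by_cases hn : n < N
    · simpa [extendByZero_apply, hn] using hε.le
    · simpa [extendByZero_apply, hn] using (hN n (not_lt.1 hn) f hf).le

end ZeroAtInftyContinuousMap

open ZeroAtInftyContinuousMap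

lemma WeakStarNull.exists_norm_le [CompleteSpace E] {χ : ℕ → E →L[𝕜] 𝕜} (hχ : WeakStarNull χ) :
    ∃ C, ∀ n, ‖χ n‖ ≤ C :=
  banach_steinhaus fun x =>
    let ⟨C, hC⟩ := (hχ x).norm.bddAbove_range
    ⟨C, fun n => hC ⟨n, rfl⟩⟩

def WeakStarNull.toCzero [CompleteSpace E] {χ : ℕ → E →L[𝕜] 𝕜} (hχ : WeakStarNull χ) :
    E →L[𝕜] czero 𝕜 :=
  LinearMap.mkContinuousOfExistsBound
    { toFun x := ofTendsto (fun n => χ n x) (hχ x)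
      map_add' x y := by ext n; simp
      map_smul' c x := by ext n; simp } <|
    let ⟨C, hC⟩ := hχ.exists_norm_le
    ⟨C, fun x => norm_le_of_forall_norm_apply_le
      (mul_nonneg ((norm_nonneg _).trans (hC 0)) (norm_nonneg x))
      fun n => (χ n).le_of_opNorm_le (hC n) x⟩

lemma unifNull_evalCLM_comp_iff {X : Set E} (hX : IsBounded X) (T : E →L[𝕜] czero 𝕜) :
    UnifNull (fun n => (evalCLM 𝕜 n).comp T) X ↔
      TendstoUniformlyOn (fun n (f : czero 𝕜) => f n) 0 atTop (T '' X) := by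
  rw [tendstoUniformlyOn_zero_iff_tendsto_iSup_norm
    (bddAbove_range_norm_apply (T.lipschitz.isBounded_image hX)), UnifNull]
  congr! 3 with n
  exact (iSup_image_subtype T (fun f : czero 𝕜 => ‖f n‖) X).symm

theorem limited_iff_forall_totallyBounded_image [CompleteSpace E] {X : Set E} (hX : IsBounded X) :
    Limited 𝕜 X ↔ ∀ T : E →L[𝕜] czero 𝕜, TotallyBounded (T '' X) := by
  refine ⟨fun hX_lim T => ?_, fun h χ hχ => ?_⟩
  · refine totallyBounded_of_tendstoUniformlyOn (T.lipschitz.isBounded_image hX) ?_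
    exact (unifNull_evalCLM_comp_iff hX T).1 (hX_lim _ fun x => (T x).tendsto_atTop)
  · exact (unifNull_evalCLM_comp_iff hX hχ.toCzero).2 (tendstoUniformlyOn_of_totallyBounded (h _))

theorem stmt6 [CompleteSpace E] :
    GelfandPhillips 𝕜 E ↔
      ∀ X : Set E, IsBounded X → ¬ TotallyBounded X →
        ∃ T : E →L[𝕜] czero 𝕜, ¬ TotallyBounded (T '' X) := by
  refine forall₂_congr fun X hX => ?_
  rw [limited_iff_forall_totallyBounded_image hX, ← not_imp_not, not_forall]
end
end

section
/- If a Banach space E is strongly Gelfand–Phillips then E is isomorphic (linearly homeomorphic) to a closed subspace of c₀. -/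
open Filter Topology Bornology

noncomputable section

variable {𝕜 E F : Type*} [RCLike 𝕜] [NormedAddCommGroup E] [NormedSpace 𝕜 E]
  [NormedAddCommGroup F] [NormedSpace 𝕜 F]

/-! By Banach–Steinhaus the weak* null sequence `χ` is bounded, so `x ↦ (χ n x)ₙ` is an operator
into `c₀`. Its kernel `K = ⋂ ker χₙ` is finite dimensional: `χ` vanishes on the unit ball of `K`,
which is therefore totally bounded. Prepending finitely many functionals that separate the points
of `K` gives an injective operator `T : E → c₀`. If `T` were not bounded below, there would be
unit vectors `uₖ` with `T uₖ → 0`; then `χ` tends to `0` uniformly on `{uₖ}`, so this set is totally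
bounded and a subsequence converges to a unit vector killed by `T`. Being bounded below, `T` has
closed range. -/

open Set Function

lemma ZeroAtInftyContinuousMap.norm_apply_le_s11 {α β : Type*} [TopologicalSpace α]
    [SeminormedAddCommGroup β] (f : ZeroAtInftyContinuousMap α β) (a : α) : ‖f a‖ ≤ ‖f‖ := by
  rw [← norm_toBCF_eq_norm]
  exact f.toBCF.norm_coe_le_norm a

lemma ZeroAtInftyContinuousMap.norm_le {α β : Type*} [TopologicalSpace α]
    [SeminormedAddCommGroup β] (f : ZeroAtInftyContinuousMap α β) {C : ℝ} (hC : 0 ≤ C) :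
    ‖f‖ ≤ C ↔ ∀ a, ‖f a‖ ≤ C := by
  rw [← norm_toBCF_eq_norm]
  exact BoundedContinuousFunction.norm_le hC

section finPrepend

variable {α : Type*} {d : ℕ} (ψ : Fin d → α) (χ : ℕ → α)

def finPrepend (n : ℕ) : α :=
  if h : n < d then ψ ⟨n, h⟩ else χ (n - d)

@[simp]
lemma finPrepend_fin (i : Fin d) : finPrepend ψ χ i = ψ i := by
  simp [finPrepend]

@[simp]
lemma finPrepend_add (n : ℕ) : finPrepend ψ χ (n + d) = χ n := by
  simp [finPrepend]

end finPrepend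

namespace WeakStarNull

variable {χ : ℕ → E →L[𝕜] 𝕜}

lemma finPrepend (hχ : WeakStarNull χ) {d : ℕ} (ψ : Fin d → E →L[𝕜] 𝕜) :
    WeakStarNull (finPrepend ψ χ) := fun x =>
  ((hχ x).comp (tendsto_sub_atTop_nat d)).congr' <| by
    filter_upwards [eventually_ge_atTop d] with n hn
    simp [_root_.finPrepend, not_lt.2 hn]

lemma exists_norm_le_s11 [CompleteSpace E] (hχ : WeakStarNull χ) : ∃ C, ∀ n, ‖χ n‖ ≤ C :=
  banach_steinhaus fun x => by
    obtain ⟨C, hC⟩ := (hχ x).norm.bddAbove_range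
    exact ⟨C, fun n => hC (mem_range_self n)⟩

def toCzero_s11 [CompleteSpace E] (hχ : WeakStarNull χ) : E →L[𝕜] czero 𝕜 :=
  LinearMap.mkContinuousOfExistsBound
    { toFun := fun x =>
        ⟨⟨fun n => χ n x, continuous_of_discreteTopology⟩, by
          simpa [cocompact_eq_atTop] using hχ x⟩
      map_add' := fun x y => by ext n; simp
      map_smul' := fun c x => by ext n; simp } <| by
    obtain ⟨C, hC⟩ := hχ.exists_norm_le_s11
    have hC0 : 0 ≤ C := (norm_nonneg _).trans (hC 0)
    refine ⟨C, fun x => (ZeroAtInftyContinuousMap.norm_le _ (by positivity)).2 fun n => ?_⟩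
    exact ((χ n).le_opNorm x).trans (mul_le_mul_of_nonneg_right (hC n) (norm_nonneg x))

@[simp]
lemma toCzero_apply [CompleteSpace E] (hχ : WeakStarNull χ) (x : E) (n : ℕ) :
    hχ.toCzero_s11 x n = χ n x :=
  rfl

lemma unifNull_range (hχ : WeakStarNull χ) {u : ℕ → E} {ε : ℕ → ℝ}
    (hε : Tendsto ε atTop (𝓝 0)) (hle : ∀ n k, ‖χ n (u k)‖ ≤ ε k) : UnifNull χ (range u) := by
  refine tendsto_order.2 ⟨fun a ha => Eventually.of_forall fun n =>
    ha.trans_le (Real.iSup_nonneg fun _ => norm_nonneg _), fun δ hδ => ?_⟩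
  have hδ2 := half_pos hδ
  obtain ⟨K, hK⟩ := eventually_atTop.1 (hε.eventually (gt_mem_nhds hδ2))
  have hsmall : ∀ᶠ n in atTop, ∀ k ∈ Finset.range K, ‖χ n (u k)‖ < δ / 2 :=
    (Finset.range K).eventually_all.2 fun k _ =>
      (hχ (u k)).norm.eventually (gt_mem_nhds (by simpa using hδ2))
  filter_upwards [hsmall] with n hn
  refine (Real.iSup_le ?_ hδ2.le).trans_lt (half_lt_self hδ)
  rintro ⟨_, k, rfl⟩
  rcases lt_or_ge k K with hk | hk
  · exact (hn k (Finset.mem_range.2 hk)).le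
  · exact (hle n k).trans (hK k hk).le

end WeakStarNull

namespace ContinuousLinearMap

variable {T : E →L[𝕜] F}

lemma exists_unit_seq_tendsto_zero_of_not_bounded_below
    (hT : ¬ ∃ c > (0 : ℝ), ∀ x, c * ‖x‖ ≤ ‖T x‖) :
    ∃ u : ℕ → E, (∀ k, ‖u k‖ = 1) ∧ Tendsto (fun k => T (u k)) atTop (𝓝 0) := by
  push Not at hT
  have hu : ∀ k : ℕ, ∃ v : E, ‖v‖ = 1 ∧ ‖T v‖ < 1 / (k + 1) := fun k => by
    obtain ⟨x, hx⟩ := hT (1 / (k + 1)) (by positivity)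
    have hx0 : x ≠ 0 := by rintro rfl; simp at hx
    refine ⟨(‖x‖⁻¹ : 𝕜) • x, norm_smul_inv_norm hx0, ?_⟩
    rw [map_smul, norm_smul, norm_inv, norm_algebraMap', norm_norm,
      inv_mul_lt_iff₀ (norm_pos_iff.2 hx0), mul_comm]
    exact hx
  choose u hu1 hu2 using hu
  refine ⟨u, hu1, tendsto_zero_iff_norm_tendsto_zero.2 ?_⟩
  exact squeeze_zero (fun _ => norm_nonneg _) (fun k => (hu2 k).le)
    tendsto_one_div_add_atTop_nhds_zero_nat

lemma exists_mul_norm_le_norm_of_injective [CompleteSpace E] (hT : Injective T)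
    (htb : ∀ u : ℕ → E, (∀ k, ‖u k‖ = 1) → Tendsto (fun k => T (u k)) atTop (𝓝 0) →
      TotallyBounded (range u)) :
    ∃ c > (0 : ℝ), ∀ x, c * ‖x‖ ≤ ‖T x‖ := by
  by_contra hc
  obtain ⟨u, hu1, hTu⟩ := exists_unit_seq_tendsto_zero_of_not_bounded_below hc
  have hsphere : range u ⊆ Metric.sphere 0 1 := by
    rintro _ ⟨k, rfl⟩
    simpa using hu1 k
  obtain ⟨x, hx, φ, hφ, hux⟩ := ((htb u hu1 hTu).closure.isCompact_of_isClosed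
    isClosed_closure).tendsto_subseq fun k => subset_closure (mem_range_self k)
  have hx1 : ‖x‖ = 1 := by
    simpa using closure_minimal hsphere Metric.isClosed_sphere hx
  have hTx : T x = 0 :=
    tendsto_nhds_unique ((T.continuous.tendsto x).comp hux) (hTu.comp hφ.tendsto_atTop)
  simp [hT (hTx.trans T.map_zero.symm)] at hx1

lemma isClosed_range_of_mul_norm_le [CompleteSpace E] {c : ℝ} (hc : 0 < c)
    (h : ∀ x, c * ‖x‖ ≤ ‖T x‖) : IsClosed (range T) := by
  refine (T.antilipschitz_of_bound (K := c⁻¹.toNNReal) fun x => ?_).isClosed_range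
    T.uniformContinuous
  rw [Real.coe_toNNReal _ (inv_nonneg.2 hc.le), inv_mul_eq_div, le_div_iff₀ hc, mul_comm]
  exact h x

end ContinuousLinearMap

lemma Submodule.exists_fin_dual_separating (K : Submodule 𝕜 E) [FiniteDimensional 𝕜 K] :
    ∃ (d : ℕ) (ψ : Fin d → E →L[𝕜] 𝕜), ∀ x ∈ K, (∀ i, ψ i x = 0) → x = 0 := by
  obtain ⟨P, hP⟩ := Submodule.ClosedComplemented.of_finiteDimensional K
  let b := Module.finBasis 𝕜 K
  refine ⟨_, fun i => (LinearMap.toContinuousLinearMap (b.coord i)).comp P, fun x hx h => ?_⟩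
  have : (⟨x, hx⟩ : K) = 0 := b.forall_coord_eq_zero_iff.1 fun i => by simpa [hP ⟨x, hx⟩] using h i
  simpa using congrArg Subtype.val this

lemma finiteDimensional_iInf_ker {χ : ℕ → E →L[𝕜] 𝕜}
    (hχ : ∀ B : Set E, IsBounded B → UnifNull χ B → TotallyBounded B) :
    FiniteDimensional 𝕜 ↥(⨅ n, LinearMap.ker (χ n : E →ₗ[𝕜] 𝕜)) := by
  set K := ⨅ n, LinearMap.ker (χ n : E →ₗ[𝕜] 𝕜)
  have hB : IsBounded ((↑) '' Metric.closedBall (0 : K) 1 : Set E) :=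
    (Metric.isBounded_closedBall (x := (0 : E)) (r := 1)).subset <| by
      rintro _ ⟨x, hx, rfl⟩
      simpa using hx
  have hU : UnifNull χ ((↑) '' Metric.closedBall (0 : K) 1 : Set E) := by
    have hvanish : ∀ n (x : ((↑) '' Metric.closedBall (0 : K) 1 : Set E)), ‖χ n x‖ = 0 := by
      rintro n ⟨_, ⟨x, -, rfl⟩⟩
      simpa using (Submodule.mem_iInf _).1 x.2 n
    simp only [UnifNull, hvanish, Real.iSup_const_zero]
    exact tendsto_const_nhds
  refine .of_totallyBounded_nhds_zero 𝕜 (Metric.closedBall_mem_nhds 0 one_pos) ?_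
  exact (totallyBounded_image_iff isUniformEmbedding_subtype_val.isUniformInducing).1 (hχ _ hB hU)

theorem stmt11 [CompleteSpace E]
    (h : ∃ χ : ℕ → E →L[𝕜] 𝕜, WeakStarNull χ ∧
      ∀ B : Set E, IsBounded B → ¬ TotallyBounded B → ¬ UnifNull χ B) :
    ∃ T : E →L[𝕜] czero 𝕜, IsClosed (Set.range T) ∧
      ∃ c > (0 : ℝ), ∀ x : E, c * ‖x‖ ≤ ‖T x‖ := by
  obtain ⟨χ, hχ, hGP⟩ := h
  have htb : ∀ B : Set E, IsBounded B → UnifNull χ B → TotallyBounded B :=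
    fun B hB hU => by_contra fun hB' => hGP B hB hB' hU
  have := finiteDimensional_iInf_ker htb
  obtain ⟨d, ψ, hψ⟩ :=
    Submodule.exists_fin_dual_separating (⨅ n, LinearMap.ker (χ n : E →ₗ[𝕜] 𝕜))
  set T := (hχ.finPrepend ψ).toCzero_s11
  have hT : Injective T := (injective_iff_map_eq_zero T).2 fun x hx => by
    have hcoords : ∀ n, finPrepend ψ χ n x = 0 := fun n => by
      simpa [T] using DFunLike.congr_fun hx n
    refine hψ x (Submodule.mem_iInf _ |>.2 fun n => ?_) fun i => by simpa using hcoords i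
    simpa using hcoords (n + d)
  obtain ⟨c, hc, hcT⟩ := T.exists_mul_norm_le_norm_of_injective hT fun u hu hTu =>
    htb _ (isBounded_iff_forall_norm_le.2 ⟨1, by rintro _ ⟨k, rfl⟩; exact (hu k).le⟩)
      (hχ.unifNull_range (tendsto_zero_iff_norm_tendsto_zero.1 hTu) fun n k => by
        simpa [T] using (T (u k)).norm_apply_le_s11 (n + d))
  exact ⟨T, T.isClosed_range_of_mul_norm_le hc hcT, c, hc, hcT⟩
end
end
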